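/- Let G be an n-vertex Class 2 simple graph with maximum degree Δ having a full-deficiency pair (a,b) such that ab is a critical edge of G. Then for every vertex x ∈ (N_G(a) ∪ N_G(b)) ∖ {a,b}, we have d_G(x) = Δ. -/

import Mathlib

/-- `c` is a proper edge coloring of `G` using colors in `{1, …, k}`:
every edge gets a color in `[1,k]`, and distinct edges sharing an endpoint
get distinct colors. -/
def IsEdgeColoring {V : Type*} (G : SimpleGraph V) (k : ℕ) (c : Sym2 V → ℕ) : Prop :=
  (∀ e ∈ G.edgeSet, 1 ≤ c e ∧ c e ≤ k) ∧
    ∀ e ∈ G.edgeSet, ∀ f ∈ G.edgeSet, e ≠ f → (∃ v, v ∈ e ∧ v ∈ f) → c e ≠ c f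

/-- The chromatic index `χ'(G)`: the least `k` admitting a proper edge `k`-coloring. -/
noncomputable def chromIndex {V : Type*} (G : SimpleGraph V) : ℕ :=
  sInf {k | ∃ c, IsEdgeColoring G k c}

/-- An edge `e` of `G` is critical if `χ'(G-e) < χ'(G)`. -/
def IsCriticalEdge {V : Type*} (G : SimpleGraph V) (e : Sym2 V) : Prop :=
  e ∈ G.edgeSet ∧ chromIndex (G.deleteEdges {e}) < chromIndex G

/-- The set of colors of `[1,k]` missing at `v` under the coloring `c` of `G`. -/
def missingColors {V : Type*} (G : SimpleGraph V) (k : ℕ) (c : Sym2 V → ℕ) (v : V) : Set ℕ :=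
  {α | 1 ≤ α ∧ α ≤ k ∧ ∀ e ∈ G.edgeSet, v ∈ e → c e ≠ α}

/-- `G` is `Δ`-critical: `Δ` is the maximum degree of `G`, `χ'(G) = Δ+1`, and every
proper subgraph has chromatic index less than `Δ+1`. -/
def IsDeltaCritical {V : Type*} [Fintype V] (G : SimpleGraph V) [DecidableRel G.Adj]
    (Δ : ℕ) : Prop :=
  G.maxDegree = Δ ∧ chromIndex G = Δ + 1 ∧
    ∀ H : SimpleGraph V, H ≤ G → H ≠ G → chromIndex H < Δ + 1

/-- A Kierstead path `(v₀, v₀v₁, v₁, …, v_{p-1}v_p, v_p)` with respect to the edge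
`v₀v₁` and a `k`-coloring `c` of `G - v₀v₁`, encoded by the list `P = [v₀, …, v_p]`. -/
structure IsKiersteadPath {V : Type*} (G : SimpleGraph V) (k : ℕ) (c : Sym2 V → ℕ)
    (P : List V) : Prop where
  two_le : 2 ≤ P.length
  nodup : P.Nodup
  adj : ∀ (i : ℕ) (h : i + 1 < P.length), G.Adj (P[i]'(by omega)) (P[i+1]'h)
  color : ∀ (i : ℕ) (h : i + 1 < P.length), 1 ≤ i →
      ∃ (j : ℕ) (_ : j ≤ i),
        c (Sym2.mk (P[i]'(by omega)) (P[i+1]'h)) ∈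
          missingColors (G.deleteEdges {Sym2.mk (P[0]'(by omega)) (P[1]'(by omega))}) k c
            (P[j]'(by omega))

/-- A multifan centered at `r` with respect to the edge `r s₁` and a `k`-coloring `c` of
`G - r s₁`, encoded by `r` and the list `sl = [s₁, …, s_p]`. -/
structure IsMultifan {V : Type*} (G : SimpleGraph V) (k : ℕ) (c : Sym2 V → ℕ)
    (r : V) (sl : List V) : Prop where
  one_le : 1 ≤ sl.length
  nodup : (r :: sl).Nodup
  adj : ∀ (i : ℕ) (h : i < sl.length), G.Adj r (sl[i]'h)
  color : ∀ (i : ℕ) (h : i < sl.length), 1 ≤ i →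
      ∃ (j : ℕ) (_ : j < i),
        c (Sym2.mk r (sl[i]'h)) ∈
          missingColors (G.deleteEdges {Sym2.mk r (sl[0]'(by omega))}) k c
            (sl[j]'(by omega))

/-- The subgraph of `G` whose edges are the edges colored `α` or `β` by `c`;
its components are the `(α,β)`-chains. -/
def chainGraph {V : Type*} (G : SimpleGraph V) (c : Sym2 V → ℕ) (α β : ℕ) :
    SimpleGraph V where
  Adj x y := G.Adj x y ∧ (c (Sym2.mk x y) = α ∨ c (Sym2.mk x y) = β)
  symm := ⟨by
    intro x y hxy
    refine ⟨hxy.1.symm, ?_⟩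
    rw [Sym2.eq_swap]
    exact hxy.2⟩
  loopless := ⟨fun x hx => G.loopless.irrefl x hx.1⟩

/-- `x` and `y` are `(α,β)`-linked with respect to the coloring `c` of `G`:
they belong to the same `(α,β)`-chain. -/
def Linked {V : Type*} (G : SimpleGraph V) (c : Sym2 V → ℕ) (α β : ℕ) (x y : V) : Prop :=
  (chainGraph G c α β).Reachable x y

/-!
Color `G - ab` with `Δ` colors. The colors missing at `a` and at `b` are disjoint (a common one
would color `ab`) and, since `d(a) + d(b) = Δ + 2`, their numbers add up to `Δ`: every color is
missing at `a` or at `b`. Suppose a neighbor `x ≠ b` of `a` misses a color `α`; the color `γ` of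
`ax` is then missing at `b`. If `α` is missing at `a`, recolor `ax` with `α`. Otherwise `α` is
missing at `b`; pick `β` missing at `a`. As `a`, `b`, `x` are ends of `(α,β)`-chains, one of `b`,
`x` is not on the chain of `a`: swapping that chain at `b` makes `β` missing at `a` and `b`, and
swapping it at `x` lets `ax` be recolored `β`. Each time `a` and `b` get a common missing color,
contradicting `χ'(G) = Δ + 1`.
-/

open SimpleGraph

section

variable {V : Type*}

namespace IsEdgeColoring

variable {G H : SimpleGraph V} {k : ℕ} {c : Sym2 V → ℕ}

lemma mono_right (hc : IsEdgeColoring G k c) {k' : ℕ} (hk : k ≤ k') :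
    IsEdgeColoring G k' c :=
  ⟨fun e he => ⟨(hc.1 e he).1, (hc.1 e he).2.trans hk⟩, hc.2⟩

lemma anti (hc : IsEdgeColoring G k c) (hHG : H ≤ G) : IsEdgeColoring H k c :=
  ⟨fun e he => hc.1 e (edgeSet_mono hHG he),
    fun e he f hf => hc.2 e (edgeSet_mono hHG he) f (edgeSet_mono hHG hf)⟩

lemma color_mem_Icc (hc : IsEdgeColoring G k c) {u v : V} (h : G.Adj u v) :
    c s(u, v) ∈ Set.Icc 1 k :=
  hc.1 _ h

lemma eq_of_color_eq (hc : IsEdgeColoring G k c) {v u₁ u₂ : V} (h₁ : G.Adj v u₁)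
    (h₂ : G.Adj v u₂) (h : c s(v, u₁) = c s(v, u₂)) : u₁ = u₂ := by
  by_contra hne
  exact hc.2 _ h₁ _ h₂ (fun he => hne (Sym2.congr_right.mp he))
    ⟨v, Sym2.mem_mk_left _ _, Sym2.mem_mk_left _ _⟩ h

lemma chromIndex_le (hc : IsEdgeColoring G k c) : chromIndex G ≤ k :=
  Nat.sInf_le ⟨c, hc⟩

end IsEdgeColoring

lemma IsCriticalEdge.exists_isEdgeColoring_deleteEdges {G : SimpleGraph V} {e : Sym2 V}
    (h : IsCriticalEdge G e) :
    ∃ c, IsEdgeColoring (G.deleteEdges {e}) (chromIndex G - 1) c := by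
  have hG : {k | ∃ c, IsEdgeColoring G k c}.Nonempty := by
    by_contra hempty
    have h0 : chromIndex G = 0 := by
      rw [chromIndex, Set.not_nonempty_iff_eq_empty.mp hempty, Nat.sInf_empty]
    exact absurd h.2 (h0 ▸ Nat.not_lt_zero _)
  obtain ⟨k, c, hc⟩ := hG
  obtain ⟨c', hc'⟩ : ∃ c', IsEdgeColoring (G.deleteEdges {e}) (chromIndex _) c' :=
    Nat.sInf_mem (s := {k | ∃ c, IsEdgeColoring (G.deleteEdges {e}) k c})
      ⟨k, c, hc.anti (G.deleteEdges_le _)⟩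
  exact ⟨c', hc'.mono_right (by have := h.2; omega)⟩

section missingColors

variable {G H : SimpleGraph V} {k : ℕ} {c : Sym2 V → ℕ}

lemma missingColors_anti (hHG : H ≤ G) (v : V) :
    missingColors G k c v ⊆ missingColors H k c v :=
  fun _ ⟨h₁, h₂, h⟩ => ⟨h₁, h₂, fun e he => h e (edgeSet_mono hHG he)⟩

lemma finite_missingColors (v : V) : (missingColors G k c v).Finite :=
  (Set.finite_Icc 1 k).subset fun _ h => ⟨h.1, h.2.1⟩

lemma missingColors_update_of_notMem [DecidableEq V] {e : Sym2 V} {w : V} (hw : w ∉ e) (δ : ℕ) :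
    missingColors G k (Function.update c e δ) w = missingColors G k c w := by
  ext γ
  refine and_congr_right fun _ => and_congr_right fun _ => forall₂_congr fun f _ => ?_
  refine imp_congr_right fun hwf => ?_
  rw [Function.update_of_ne (by rintro rfl; exact hw hwf)]

lemma missingColors_eq_sdiff_image (v : V) :
    missingColors G k c v = Set.Icc 1 k \ (fun u => c s(v, u)) '' G.neighborSet v := by
  ext γ
  constructor
  · rintro ⟨h₁, h₂, h⟩
    exact ⟨⟨h₁, h₂⟩, fun ⟨u, hu, hγ⟩ => h _ hu (Sym2.mem_mk_left _ _) hγ⟩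
  · rintro ⟨⟨h₁, h₂⟩, h⟩
    refine ⟨h₁, h₂, fun e he hve hγ => h ⟨Sym2.Mem.other hve, ?_, ?_⟩⟩
    · rwa [mem_neighborSet, ← mem_edgeSet, Sym2.other_spec hve]
    · show c s(v, _) = γ
      rwa [Sym2.other_spec hve]

lemma IsEdgeColoring.ncard_missingColors_add_ncard_neighborSet (hc : IsEdgeColoring G k c)
    (v : V) : (missingColors G k c v).ncard + (G.neighborSet v).ncard = k := by
  have hinj : Set.InjOn (fun u => c s(v, u)) (G.neighborSet v) :=
    fun _ h₁ _ h₂ h => hc.eq_of_color_eq h₁ h₂ h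
  have hsub : (fun u => c s(v, u)) '' G.neighborSet v ⊆ Set.Icc 1 k := by
    rintro _ ⟨u, hu, rfl⟩
    exact hc.color_mem_Icc hu
  rw [missingColors_eq_sdiff_image, ← hinj.ncard_image,
    Set.ncard_sdiff_add_ncard_of_subset hsub, Set.ncard_Icc_nat]
  omega

lemma Icc_subset_missingColors_union_of_disjoint {a b : V}
    (hdisj : Disjoint (missingColors G k c a) (missingColors G k c b))
    (hcard : k ≤ (missingColors G k c a).ncard + (missingColors G k c b).ncard) :
    Set.Icc 1 k ⊆ missingColors G k c a ∪ missingColors G k c b := by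
  have hsub : missingColors G k c a ∪ missingColors G k c b ⊆ Set.Icc 1 k :=
    Set.union_subset (fun _ h => ⟨h.1, h.2.1⟩) (fun _ h => ⟨h.1, h.2.1⟩)
  refine (Set.eq_of_subset_of_ncard_le hsub ?_).symm.subset
  rw [Set.ncard_union_eq hdisj (finite_missingColors a) (finite_missingColors b),
    Set.ncard_Icc_nat]
  omega

end missingColors

section update

variable [DecidableEq V] {G : SimpleGraph V} {k : ℕ} {c : Sym2 V → ℕ}

lemma IsEdgeColoring.update_of_deleteEdges {u v : V} {δ : ℕ}
    (hc : IsEdgeColoring (G.deleteEdges {s(u, v)}) k c)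
    (hu : δ ∈ missingColors (G.deleteEdges {s(u, v)}) k c u)
    (hv : δ ∈ missingColors (G.deleteEdges {s(u, v)}) k c v) :
    IsEdgeColoring G k (Function.update c s(u, v) δ) := by
  have hmem : ∀ e ∈ G.edgeSet, e ≠ s(u, v) → e ∈ (G.deleteEdges {s(u, v)}).edgeSet :=
    fun e he hne => by rw [edgeSet_deleteEdges]; exact ⟨he, hne⟩
  have hmiss : ∀ f ∈ G.edgeSet, f ≠ s(u, v) → ∀ w ∈ s(u, v), w ∈ f → c f ≠ δ := by
    intro f hf hne w hw hwf
    rcases Sym2.mem_iff.mp hw with rfl | rfl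
    · exact hu.2.2 f (hmem f hf hne) hwf
    · exact hv.2.2 f (hmem f hf hne) hwf
  constructor
  · intro e he
    by_cases h : e = s(u, v)
    · subst h; rw [Function.update_self]; exact ⟨hu.1, hu.2.1⟩
    · rw [Function.update_of_ne h]; exact hc.1 e (hmem e he h)
  · rintro e he f hf hef ⟨w, hwe, hwf⟩
    by_cases h₁ : e = s(u, v) <;> by_cases h₂ : f = s(u, v)
    · exact absurd (h₁.trans h₂.symm) hef
    · subst h₁
      rw [Function.update_self, Function.update_of_ne h₂]
      exact (hmiss f hf h₂ w hwe hwf).symm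
    · subst h₂
      rw [Function.update_self, Function.update_of_ne h₁]
      exact hmiss e he h₁ w hwf hwe
    · rw [Function.update_of_ne h₁, Function.update_of_ne h₂]
      exact hc.2 e (hmem e he h₁) f (hmem f hf h₂) hef ⟨w, hwe, hwf⟩

lemma IsEdgeColoring.update {u v : V} {δ : ℕ} (hc : IsEdgeColoring G k c)
    (hu : δ ∈ missingColors G k c u) (hv : δ ∈ missingColors G k c v) :
    IsEdgeColoring G k (Function.update c s(u, v) δ) :=
  (hc.anti (G.deleteEdges_le _)).update_of_deleteEdges
    (missingColors_anti (G.deleteEdges_le _) u hu) (missingColors_anti (G.deleteEdges_le _) v hv)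

lemma IsEdgeColoring.color_mem_missingColors_update (hc : IsEdgeColoring G k c) {a x : V}
    (hax : G.Adj a x) {δ : ℕ} (hδ : δ ≠ c s(a, x)) :
    c s(a, x) ∈ missingColors G k (Function.update c s(a, x) δ) a := by
  refine ⟨(hc.color_mem_Icc hax).1, (hc.color_mem_Icc hax).2, fun e he hae => ?_⟩
  by_cases h : e = s(a, x)
  · rw [h, Function.update_self]; exact hδ
  · rw [Function.update_of_ne h]
    exact hc.2 e he _ hax h ⟨a, hae, Sym2.mem_mk_left _ _⟩

lemma IsEdgeColoring.disjoint_missingColors_deleteEdges {u v : V}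
    (hc : IsEdgeColoring (G.deleteEdges {s(u, v)}) k c) (hk : k < chromIndex G) :
    Disjoint (missingColors (G.deleteEdges {s(u, v)}) k c u)
      (missingColors (G.deleteEdges {s(u, v)}) k c v) :=
  Set.disjoint_left.mpr fun _ hu hv =>
    (hc.update_of_deleteEdges hu hv).chromIndex_le.not_gt hk

end update

section kempe

variable {G : SimpleGraph V} {k : ℕ} {c : Sym2 V → ℕ} {α β : ℕ} {x : V}

open Classical in
/-- `Equiv.swap α β` fixes every other color, so only the `α`- and `β`-edges of the
`(α,β)`-chain through `x` change color. -/
noncomputable def kempeSwap (G : SimpleGraph V) (c : Sym2 V → ℕ) (α β : ℕ) (x : V)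
    (e : Sym2 V) : ℕ :=
  if ∃ v ∈ e, Linked G c α β x v then Equiv.swap α β (c e) else c e

lemma Linked.of_mem_edge {e : Sym2 V} (he : e ∈ G.edgeSet) (hce : c e = α ∨ c e = β)
    {v w : V} (hv : v ∈ e) (hw : w ∈ e) (h : Linked G c α β x v) : Linked G c α β x w := by
  by_cases hvw : v = w
  · exact hvw ▸ h
  · have he' : e = s(v, w) := (Sym2.mem_and_mem_iff hvw).mp ⟨hv, hw⟩
    subst he'
    exact h.trans (Adj.reachable ⟨he, hce⟩)

lemma kempeSwap_of_linked {e : Sym2 V} {w : V} (hw : w ∈ e) (h : Linked G c α β x w) :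
    kempeSwap G c α β x e = Equiv.swap α β (c e) :=
  if_pos ⟨w, hw, h⟩

lemma kempeSwap_of_not_linked {e : Sym2 V} (he : e ∈ G.edgeSet) {w : V} (hw : w ∈ e)
    (h : ¬ Linked G c α β x w) : kempeSwap G c α β x e = c e := by
  unfold kempeSwap
  split_ifs with hex
  · obtain ⟨v, hv, hvx⟩ := hex
    by_cases hce : c e = α ∨ c e = β
    · exact absurd (hvx.of_mem_edge he hce hv hw) h
    · rw [not_or] at hce
      exact Equiv.swap_apply_of_ne_of_ne hce.1 hce.2
  · rfl

lemma kempeSwap_eq_or (G : SimpleGraph V) (c : Sym2 V → ℕ) (α β : ℕ) (x : V) (e : Sym2 V) :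
    kempeSwap G c α β x e = c e ∨ kempeSwap G c α β x e = Equiv.swap α β (c e) := by
  unfold kempeSwap
  split_ifs
  exacts [Or.inr rfl, Or.inl rfl]

lemma swap_mem_Icc {α β γ k : ℕ} (hα : α ∈ Set.Icc 1 k) (hβ : β ∈ Set.Icc 1 k)
    (hγ : γ ∈ Set.Icc 1 k) : Equiv.swap α β γ ∈ Set.Icc 1 k := by
  rw [Equiv.swap_apply_def]
  split_ifs
  exacts [hβ, hα, hγ]

lemma IsEdgeColoring.kempeSwap (hc : IsEdgeColoring G k c) (hα : α ∈ Set.Icc 1 k)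
    (hβ : β ∈ Set.Icc 1 k) (x : V) : IsEdgeColoring G k (kempeSwap G c α β x) := by
  constructor
  · intro e he
    rcases kempeSwap_eq_or G c α β x e with h | h <;> rw [h]
    exacts [hc.1 e he, swap_mem_Icc hα hβ (hc.1 e he)]
  · rintro e he f hf hef ⟨w, hwe, hwf⟩
    have hne := hc.2 e he f hf hef ⟨w, hwe, hwf⟩
    by_cases h : Linked G c α β x w
    · rw [kempeSwap_of_linked hwe h, kempeSwap_of_linked hwf h]
      exact (Equiv.swap α β).injective.ne hne
    · rwa [kempeSwap_of_not_linked he hwe h, kempeSwap_of_not_linked hf hwf h]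

lemma missingColors_kempeSwap_of_not_linked {w : V} (h : ¬ Linked G c α β x w) :
    missingColors G k (kempeSwap G c α β x) w = missingColors G k c w := by
  ext γ
  refine and_congr_right fun _ => and_congr_right fun _ => forall₂_congr fun e he => ?_
  refine imp_congr_right fun hwe => ?_
  rw [kempeSwap_of_not_linked he hwe h]

lemma swap_mem_missingColors_kempeSwap (hα : α ∈ Set.Icc 1 k) (hβ : β ∈ Set.Icc 1 k)
    {w : V} (h : Linked G c α β x w) {γ : ℕ} (hγ : γ ∈ missingColors G k c w) :
    Equiv.swap α β γ ∈ missingColors G k (kempeSwap G c α β x) w := by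
  obtain ⟨h₁, h₂, hmiss⟩ := hγ
  refine ⟨(swap_mem_Icc hα hβ ⟨h₁, h₂⟩).1, (swap_mem_Icc hα hβ ⟨h₁, h₂⟩).2, fun e he hwe => ?_⟩
  rw [kempeSwap_of_linked hwe h]
  exact (Equiv.swap α β).injective.ne (hmiss e he hwe)

lemma mem_missingColors_kempeSwap_of_ne {γ : ℕ} (hγα : γ ≠ α) (hγβ : γ ≠ β) {w : V}
    (hγ : γ ∈ missingColors G k c w) :
    γ ∈ missingColors G k (kempeSwap G c α β x) w := by
  obtain ⟨h₁, h₂, hmiss⟩ := hγ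
  refine ⟨h₁, h₂, fun e he hwe => ?_⟩
  rcases kempeSwap_eq_or G c α β x e with h | h <;> rw [h]
  · exact hmiss e he hwe
  · rw [← Equiv.swap_apply_of_ne_of_ne hγα hγβ]
    exact (Equiv.swap α β).injective.ne (hmiss e he hwe)

end kempe

namespace SimpleGraph

variable {H : SimpleGraph V}

lemma Walk.IsPath.getVert_pred_ne_getVert_succ {u v : V} {p : H.Walk u v} (hp : p.IsPath)
    {i : ℕ} (h0 : 0 < i) (hi : i < p.length) : p.getVert (i - 1) ≠ p.getVert (i + 1) :=
  fun h => by
    have := hp.getVert_injOn (by simp only [Set.mem_ofPred_eq]; omega)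
      (by simp only [Set.mem_ofPred_eq]; omega) h
    omega

lemma Walk.adj_getVert_pred {u v : V} (p : H.Walk u v) {i : ℕ} (h0 : 0 < i)
    (hi : i ≤ p.length) : H.Adj (p.getVert i) (p.getVert (i - 1)) := by
  have := p.adj_getVert_succ (i := i - 1) (by omega)
  rw [Nat.sub_add_cancel h0] at this
  exact this.symm

lemma Walk.IsPath.mem_support_of_adj
    (hmax : ∀ v u₁ u₂ u₃, H.Adj v u₁ → H.Adj v u₂ → H.Adj v u₃ →
      u₁ = u₂ ∨ u₁ = u₃ ∨ u₂ = u₃)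
    {u v : V} {p : H.Walk u v} (hp : p.IsPath) (huv : u ≠ v)
    (hu : (H.neighborSet u).Subsingleton) (hv : (H.neighborSet v).Subsingleton)
    {y z : V} (hy : y ∈ p.support) (hyz : H.Adj y z) : z ∈ p.support := by
  obtain ⟨i, rfl, hi⟩ := Walk.mem_support_iff_exists_getVert.mp hy
  have hlen : 0 < p.length := Nat.pos_of_ne_zero fun h => huv (Walk.eq_of_length_eq_zero h)
  rcases Nat.eq_zero_or_pos i with rfl | h0
  · rw [Walk.getVert_zero] at hyz
    have := p.adj_getVert_succ hlen
    rw [Walk.getVert_zero] at this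
    exact hu hyz this ▸ p.getVert_mem_support _
  rcases hi.lt_or_eq with hi | rfl
  · rcases hmax _ _ _ _ hyz (p.adj_getVert_pred h0 hi.le) (p.adj_getVert_succ hi) with h | h | h
    · exact h ▸ p.getVert_mem_support _
    · exact h ▸ p.getVert_mem_support _
    · exact absurd h (hp.getVert_pred_ne_getVert_succ h0 hi)
  · rw [Walk.getVert_length] at hyz
    have := p.adj_getVert_pred h0 le_rfl
    rw [Walk.getVert_length] at this
    exact hv hyz this ▸ p.getVert_mem_support _

lemma eq_or_eq_of_reachable_of_subsingleton_neighborSet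
    (hmax : ∀ v u₁ u₂ u₃, H.Adj v u₁ → H.Adj v u₂ → H.Adj v u₃ →
      u₁ = u₂ ∨ u₁ = u₃ ∨ u₂ = u₃)
    {u v w : V} (huv : u ≠ v)
    (hu : (H.neighborSet u).Subsingleton) (hv : (H.neighborSet v).Subsingleton)
    (hw : (H.neighborSet w).Subsingleton) (hreach_v : H.Reachable u v)
    (hreach_w : H.Reachable u w) : w = u ∨ w = v := by
  classical
  obtain ⟨p, hp⟩ := hreach_v.some.toPath
  have hsupp : ∀ {y z : V} (q : H.Walk y z), y ∈ p.support → z ∈ p.support := by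
    intro y z q
    induction q with
    | nil => exact id
    | cons h _ ih => exact fun hy => ih (hp.mem_support_of_adj hmax huv hu hv hy h)
  obtain ⟨i, rfl, hi⟩ :=
    Walk.mem_support_iff_exists_getVert.mp (hsupp hreach_w.some p.start_mem_support)
  by_contra hne
  rw [not_or] at hne
  have h0 : 0 < i := Nat.pos_of_ne_zero fun h => hne.1 (by rw [h, Walk.getVert_zero])
  have hlt : i < p.length := hi.lt_of_ne fun h => hne.2 (by rw [h, Walk.getVert_length])
  exact hp.getVert_pred_ne_getVert_succ h0 hlt
    (hw (p.adj_getVert_pred h0 hi) (p.adj_getVert_succ hlt))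

end SimpleGraph

section chain

variable {G : SimpleGraph V} {k : ℕ} {c : Sym2 V → ℕ} {α β : ℕ}

lemma IsEdgeColoring.chainGraph_adj_three (hc : IsEdgeColoring G k c) {v u₁ u₂ u₃ : V}
    (h₁ : (chainGraph G c α β).Adj v u₁) (h₂ : (chainGraph G c α β).Adj v u₂)
    (h₃ : (chainGraph G c α β).Adj v u₃) : u₁ = u₂ ∨ u₁ = u₃ ∨ u₂ = u₃ := by
  rcases h₁.2 with e₁ | e₁ <;> rcases h₂.2 with e₂ | e₂ <;> rcases h₃.2 with e₃ | e₃ <;>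
    first
    | exact Or.inl (hc.eq_of_color_eq h₁.1 h₂.1 (e₁.trans e₂.symm))
    | exact Or.inr (Or.inl (hc.eq_of_color_eq h₁.1 h₃.1 (e₁.trans e₃.symm)))
    | exact Or.inr (Or.inr (hc.eq_of_color_eq h₂.1 h₃.1 (e₂.trans e₃.symm)))

lemma IsEdgeColoring.subsingleton_neighborSet_chainGraph (hc : IsEdgeColoring G k c)
    {v : V} {γ : ℕ} (hγ : γ = α ∨ γ = β) (hv : γ ∈ missingColors G k c v) :
    ((chainGraph G c α β).neighborSet v).Subsingleton := by
  intro u₁ (h₁ : (chainGraph G c α β).Adj v u₁) u₂ (h₂ : (chainGraph G c α β).Adj v u₂)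
  have n₁ := hv.2.2 _ h₁.1 (Sym2.mem_mk_left _ _)
  have n₂ := hv.2.2 _ h₂.1 (Sym2.mem_mk_left _ _)
  apply hc.eq_of_color_eq h₁.1 h₂.1
  rcases hγ with rfl | rfl <;> rcases h₁.2 with e₁ | e₁ <;> rcases h₂.2 with e₂ | e₂ <;>
    first
    | exact e₁.trans e₂.symm
    | exact absurd e₁ n₁
    | exact absurd e₂ n₂

end chain

section commonMissing

variable [DecidableEq V] {G : SimpleGraph V} {k : ℕ} {c : Sym2 V → ℕ}

lemma IsEdgeColoring.exists_common_missingColor_of_recolor (hc : IsEdgeColoring G k c)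
    {a b x : V} (hax : G.Adj a x) (hba : b ≠ a) (hbx : b ≠ x) {δ : ℕ}
    (hδa : δ ∈ missingColors G k c a) (hδx : δ ∈ missingColors G k c x)
    (hb : c s(a, x) ∈ missingColors G k c b) :
    ∃ c', IsEdgeColoring G k c' ∧
      (missingColors G k c' a ∩ missingColors G k c' b).Nonempty := by
  refine ⟨Function.update c s(a, x) δ, hc.update hδa hδx, c s(a, x), ?_, ?_⟩
  · exact hc.color_mem_missingColors_update hax
      fun h => hδa.2.2 _ hax (Sym2.mem_mk_left _ _) h.symm
  · rw [missingColors_update_of_notMem (by simp [hba, hbx])]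
    exact hb

theorem IsEdgeColoring.exists_common_missingColor (hc : IsEdgeColoring G k c)
    {a b x : V} (hax : G.Adj a x) (hba : b ≠ a) (hbx : b ≠ x)
    (hcover : Set.Icc 1 k ⊆ missingColors G k c a ∪ missingColors G k c b)
    {α β : ℕ} (hα : α ∈ missingColors G k c x) (hβ : β ∈ missingColors G k c a) :
    ∃ c', IsEdgeColoring G k c' ∧
      (missingColors G k c' a ∩ missingColors G k c' b).Nonempty := by
  set γ := c s(a, x) with hγ
  have hγα : γ ≠ α := fun h => hα.2.2 _ hax (Sym2.mem_mk_right _ _) h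
  have hγβ : γ ≠ β := fun h => hβ.2.2 _ hax (Sym2.mem_mk_left _ _) h
  have hγb : γ ∈ missingColors G k c b :=
    (hcover (hc.color_mem_Icc hax)).resolve_left fun h => h.2.2 _ hax (Sym2.mem_mk_left _ _) rfl
  have hαI : α ∈ Set.Icc 1 k := ⟨hα.1, hα.2.1⟩
  have hβI : β ∈ Set.Icc 1 k := ⟨hβ.1, hβ.2.1⟩
  rcases hcover hαI with hαa | hαb
  · exact hc.exists_common_missingColor_of_recolor hax hba hbx hαa hα hγb
  by_cases hlinked : Linked G c α β x a
  · -- `a`, `b`, `x` are ends of `(α,β)`-chains, so `b` is not on the chain through `a` and `x`.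
    have hba' : ¬ Linked G c α β b a := by
      intro hlink
      rcases eq_or_eq_of_reachable_of_subsingleton_neighborSet
        (fun _ _ _ _ => hc.chainGraph_adj_three) hax.ne.symm
        (hc.subsingleton_neighborSet_chainGraph (Or.inl rfl) hα)
        (hc.subsingleton_neighborSet_chainGraph (Or.inr rfl) hβ)
        (hc.subsingleton_neighborSet_chainGraph (Or.inl rfl) hαb)
        hlinked (hlinked.trans hlink.symm) with h | h
      exacts [hbx h, hba h]
    refine ⟨_root_.kempeSwap G c α β b, hc.kempeSwap hαI hβI b, β, ?_, ?_⟩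
    · rwa [missingColors_kempeSwap_of_not_linked hba']
    · simpa using swap_mem_missingColors_kempeSwap hαI hβI (Reachable.refl b) hαb
  · have hc' := hc.kempeSwap hαI hβI x
    refine hc'.exists_common_missingColor_of_recolor hax hba hbx (δ := β) ?_ ?_ ?_
    · rwa [missingColors_kempeSwap_of_not_linked hlinked]
    · simpa using swap_mem_missingColors_kempeSwap hαI hβI (Reachable.refl x) hα
    · rw [kempeSwap_of_not_linked hax (Sym2.mem_mk_left _ _) hlinked, ← hγ]
      exact mem_missingColors_kempeSwap_of_ne hγα hγβ hγb

end commonMissing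

namespace SimpleGraph

variable {G : SimpleGraph V}

lemma ncard_neighborSet (v : V) [Fintype (G.neighborSet v)] :
    (G.neighborSet v).ncard = G.degree v := by
  rw [← card_neighborSet_eq_degree, ← Nat.card_eq_fintype_card, Nat.card_coe_set_eq]

lemma neighborSet_deleteEdges_singleton (u v : V) :
    (G.deleteEdges {s(u, v)}).neighborSet u = G.neighborSet u \ {v} := by
  ext w
  simp only [mem_neighborSet, deleteEdges_adj, Set.mem_singleton_iff, Set.mem_sdiff,
    Sym2.congr_right]

lemma neighborSet_deleteEdges_singleton_of_notMem {e : Sym2 V} {w : V} (hw : w ∉ e) :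
    (G.deleteEdges {e}).neighborSet w = G.neighborSet w := by
  ext u
  simp only [mem_neighborSet, deleteEdges_adj, Set.mem_singleton_iff, and_iff_left_iff_imp]
  rintro - rfl
  exact hw (Sym2.mem_mk_left _ _)

end SimpleGraph

section deleteEdges

variable {G : SimpleGraph V} {k : ℕ} {c : Sym2 V → ℕ}

lemma IsEdgeColoring.ncard_missingColors_deleteEdges_add_degree_of_mem {e : Sym2 V}
    (hc : IsEdgeColoring (G.deleteEdges {e}) k c) (he : e ∈ G.edgeSet) {w : V} (hw : w ∈ e)
    [Fintype (G.neighborSet w)] :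
    (missingColors (G.deleteEdges {e}) k c w).ncard + G.degree w = k + 1 := by
  obtain ⟨w', rfl⟩ := Sym2.mem_iff_exists.mp hw
  have hcount := hc.ncard_missingColors_add_ncard_neighborSet w
  have hsdiff := Set.ncard_sdiff_singleton_add_one (s := G.neighborSet w) (a := w') he
  rw [neighborSet_deleteEdges_singleton] at hcount
  rw [← ncard_neighborSet]
  omega

lemma IsEdgeColoring.ncard_missingColors_deleteEdges_add_degree_of_notMem
    {e : Sym2 V} (hc : IsEdgeColoring (G.deleteEdges {e}) k c) {w : V} (hw : w ∉ e)
    [Fintype (G.neighborSet w)] :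
    (missingColors (G.deleteEdges {e}) k c w).ncard + G.degree w = k := by
  rw [← ncard_neighborSet, ← neighborSet_deleteEdges_singleton_of_notMem hw,
    hc.ncard_missingColors_add_ncard_neighborSet]

end deleteEdges

theorem IsCriticalEdge.degree_eq_of_adj [Fintype V] [DecidableEq V] {G : SimpleGraph V}
    [DecidableRel G.Adj] {Δ : ℕ} (hΔ : G.maxDegree = Δ) (hclass2 : chromIndex G = Δ + 1)
    {a b x : V} (hcrit : IsCriticalEdge G s(a, b)) (hfd : G.degree a + G.degree b = Δ + 2)
    (hax : G.Adj a x) (hxb : x ≠ b) : G.degree x = Δ := by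
  have hab : G.Adj a b := hcrit.1
  obtain ⟨c, hc⟩ := hcrit.exists_isEdgeColoring_deleteEdges
  rw [hclass2, Nat.add_sub_cancel] at hc
  have hdisj : ∀ c', IsEdgeColoring (G.deleteEdges {s(a, b)}) Δ c' → _ :=
    fun c' hc' => hc'.disjoint_missingColors_deleteEdges (hclass2 ▸ Nat.lt_succ_self Δ)
  have hca := hc.ncard_missingColors_deleteEdges_add_degree_of_mem hab (Sym2.mem_mk_left a b)
  have hcb := hc.ncard_missingColors_deleteEdges_add_degree_of_mem hab (Sym2.mem_mk_right a b)
  have hcx := hc.ncard_missingColors_deleteEdges_add_degree_of_notMem (w := x)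
    (by simp [hax.ne.symm, hxb])
  have hcover := Icc_subset_missingColors_union_of_disjoint (hdisj c hc) (by omega)
  have hβ : (missingColors (G.deleteEdges {s(a, b)}) Δ c a).Nonempty := by
    have := G.degree_le_maxDegree a
    exact Set.nonempty_of_ncard_ne_zero (by omega)
  by_contra hx
  have hα : (missingColors (G.deleteEdges {s(a, b)}) Δ c x).Nonempty := by
    have := G.degree_le_maxDegree x
    exact Set.nonempty_of_ncard_ne_zero (by omega)
  have hax' : (G.deleteEdges {s(a, b)}).Adj a x := by simp [hax, hxb, hab.ne]
  obtain ⟨c', hc', hcommon⟩ := hc.exists_common_missingColor hax' hab.ne.symm hxb.symm hcover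
    hα.some_mem hβ.some_mem
  exact hcommon.ne_empty (hdisj c' hc').inter_eq

end

theorem fullDeficiencyPair_neighbors_max_degree_general
    {V : Type*} [Fintype V] [DecidableEq V]
    (Δ : ℕ) (G : SimpleGraph V) [DecidableRel G.Adj]
    (hΔ : G.maxDegree = Δ) (hclass2 : chromIndex G = Δ + 1)
    (a b : V) (hfd : G.degree a + G.degree b = Δ + 2)
    (hcrit : IsCriticalEdge G (Sym2.mk a b))
    (x : V) (hx : x ∈ G.neighborFinset a ∪ G.neighborFinset b) (hxa : x ≠ a) (hxb : x ≠ b) :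
    G.degree x = Δ := by
  rcases Finset.mem_union.mp hx with hax | hbx
  · exact hcrit.degree_eq_of_adj hΔ hclass2 hfd ((G.mem_neighborFinset a x).mp hax) hxb
  · rw [Sym2.eq_swap] at hcrit
    exact hcrit.degree_eq_of_adj hΔ hclass2 (by omega) ((G.mem_neighborFinset b x).mp hbx) hxa

/-- Let `G` be an `n`-vertex Class 2 graph with maximum degree `Δ` having
a full-deficiency pair `(a,b)` with `ab` a critical edge. Then every vertex
`x ∈ (N(a) ∪ N(b)) \ {a,b}` has `d_G(x) = Δ`. -/
theorem fullDeficiencyPair_neighbors_max_degree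
    {V : Type*} [Fintype V] [DecidableEq V]
    (n Δ : ℕ) (G : SimpleGraph V) [DecidableRel G.Adj]
    (hcard : Fintype.card V = n)
    (hΔ : G.maxDegree = Δ) (hclass2 : chromIndex G = Δ + 1)
    (a b : V) (hab : G.Adj a b) (hfd : G.degree a + G.degree b = Δ + 2)
    (hcrit : IsCriticalEdge G (Sym2.mk a b))
    (x : V) (hx : x ∈ G.neighborFinset a ∪ G.neighborFinset b) (hxa : x ≠ a) (hxb : x ≠ b) :
    G.degree x = Δ :=
  fullDeficiencyPair_neighbors_max_degree_general Δ G hΔ hclass2 a b hfd hcrit x hx hxa hxb
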